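/- Let A = (Q, E, s, F) be a Wheeler r-GNFA, let ≤ be a Wheeler order on A, and let α ∈ Σ* with α ≠ ε. Let h* be defined as in the context. Then h* ≥ |G^≺(α)|, and if h* = |G^≺(α)|, then G_⊣(α) = ∅ and |G^≺_⊣(α)| = h* = |G^≺(α)|. -/

import Mathlib

/-- Strict co-lexicographic order: `α ≺ β` iff `α.reverse` is lexicographically
smaller than `β.reverse`. The empty string is the minimum. -/
def ColexLt {σ : Type*} [LinearOrder σ] (α β : List σ) : Prop :=
  List.Lex (· < ·) α.reverse β.reverse

/-- Non-strict co-lexicographic order `α ≼ β`. -/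
def ColexLe {σ : Type*} [LinearOrder σ] (α β : List σ) : Prop :=
  ColexLt α β ∨ α = β

/-- `α` is a strict suffix of `β`. -/
def IsStrictSuffix {σ : Type*} (α β : List σ) : Prop :=
  α <:+ β ∧ α ≠ β

/-- `p(α, k)`: the prefix of `α` of length `k`. -/
def pref {σ : Type*} (α : List σ) (k : ℕ) : List σ := α.take k

/-- `s(α, k)`: the suffix of `α` of length `k`. -/
def suff {σ : Type*} (α : List σ) (k : ℕ) : List σ := α.drop (α.length - k)

/-- The 1-based rank of a state in a finite linear order: `rankQ u = i` means
`u = Q[i]` in the enumeration `Q[1] < Q[2] < ⋯ < Q[|Q|]`. -/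
noncomputable def rankQ {Q : Type*} [Fintype Q] [LinearOrder Q] (u : Q) : ℕ :=
  {v : Q | v ≤ u}.ncard

/-- `Q[i, j] = {Q[i], …, Q[j]}` (empty if `i > j`). -/
def Qiv (Q : Type*) [Fintype Q] [LinearOrder Q] (i j : ℕ) : Set Q :=
  {u | i ≤ rankQ u ∧ rankQ u ≤ j}

/-- A generalized nondeterministic finite automaton: a finite set of
string-labeled edges `E ⊆ Q × Q × Σ*`, an initial state `s`, final states `F`. -/
structure GNFA (σ Q : Type*) where
  E : Finset (Q × Q × List σ)
  s : Q
  F : Finset Q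

namespace GNFA

variable {σ Q : Type*}

/-- `I A u β` means `β ∈ I_u`: `β` is obtained by concatenating the edge labels
along some path from `s` to `u` (in particular `ε ∈ I_s`). -/
inductive I (A : GNFA σ Q) : Q → List σ → Prop
  | base : I A A.s []
  | step {u v : Q} {α ρ : List σ} : I A u α → (u, v, ρ) ∈ A.E → I A v (α ++ ρ)

/-- Reachability along edges. -/
def Reach (A : GNFA σ Q) : Q → Q → Prop :=
  Relation.ReflTransGen (fun x y => ∃ ρ, (x, y, ρ) ∈ A.E)

/-- Every state is reachable from the initial state and is co-reachable
(final or allows reaching a final state). -/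
def Standard (A : GNFA σ Q) : Prop :=
  (∀ u, A.Reach A.s u) ∧ ∀ u, ∃ f ∈ A.F, A.Reach u f

/-- An ε-walk from `u` to `v`: a (possibly empty) sequence of ε-labeled edges. -/
def EpsWalk (A : GNFA σ Q) : Q → Q → Prop :=
  Relation.ReflTransGen (fun x y => (x, y, ([] : List σ)) ∈ A.E)

/-- An `r`-GNFA: all edge labels have length at most `r`. -/
def Bounded (A : GNFA σ Q) (r : ℕ) : Prop := ∀ e ∈ A.E, e.2.2.length ≤ r

/-- A GNFA without ε-transitions: every edge label is nonempty. -/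
def NoEps (A : GNFA σ Q) : Prop := ∀ e ∈ A.E, e.2.2 ≠ []

/-- `λ(u)`: the set of strings labeling some edge entering `u`. -/
def lab (A : GNFA σ Q) (u : Q) : Set (List σ) := {ρ | ∃ u', (u', u, ρ) ∈ A.E}

/-- `G_⊣(α)`: states `u` such that some `β ∈ I_u` has `α` as a suffix. -/
def Gsuf (A : GNFA σ Q) (α : List σ) : Set Q := {u | ∃ β, I A u β ∧ α <:+ β}

/-- `G*(α)`: states reached by an edge whose label has `α` as a suffix. -/
def Gstar (A : GNFA σ Q) (α : List σ) : Set Q := {u | ∃ ρ ∈ A.lab u, α <:+ ρ}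

section Colex
variable [LinearOrder σ]

/-- The preorder `u ≼_A v`. -/
def Preceq (A : GNFA σ Q) (u v : Q) : Prop :=
  ∀ α β, I A u α → I A v β →
    ¬((I A u α ∧ I A v α) ∧ (I A u β ∧ I A v β)) → ColexLt α β

/-- `G^≺(α)`: states `u` such that every `β ∈ I_u` satisfies `β ≺ α`. -/
def Gprec (A : GNFA σ Q) (α : List σ) : Set Q := {u | ∀ β, I A u β → ColexLt β α}

/-- `G^≺_⊣(α) = G^≺(α) ∪ G_⊣(α)`. -/
def GprecSuf (A : GNFA σ Q) (α : List σ) : Set Q := A.Gprec α ∪ A.Gsuf α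

/-- The linear order on `Q` is a Wheeler order on `A` (Axioms 1–4). -/
def IsWheeler [LinearOrder Q] (A : GNFA σ Q) : Prop :=
  (∀ u v : Q, u ≤ v → A.Preceq u v) ∧
  (∀ u : Q, A.s ≤ u) ∧
  (∀ u' u v' v : Q, ∀ ρ ρ' : List σ, (u', u, ρ) ∈ A.E → (v', v, ρ') ∈ A.E →
      u < v → ¬IsStrictSuffix ρ' ρ → ColexLe ρ ρ') ∧
  (∀ u' u v' v : Q, ∀ ρ : List σ, (u', u, ρ) ∈ A.E → (v', v, ρ) ∈ A.E →
      u < v → u' ≤ v')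

end Colex

section Indexed
variable [Fintype Q] [LinearOrder Q]

/-- `out(Q[1, m], ρ)`: number of edges labeled `ρ` leaving states in `Q[1, m]`. -/
noncomputable def outC (A : GNFA σ Q) (m : ℕ) (ρ : List σ) : ℕ :=
  {e : Q × Q × List σ | e ∈ A.E ∧ rankQ e.1 ≤ m ∧ e.2.2 = ρ}.ncard

/-- `in(Q[1, m], ρ)`: number of edges labeled `ρ` entering states in `Q[1, m]`. -/
noncomputable def inC (A : GNFA σ Q) (m : ℕ) (ρ : List σ) : ℕ :=
  {e : Q × Q × List σ | e ∈ A.E ∧ rankQ e.2.1 ≤ m ∧ e.2.2 = ρ}.ncard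

/-- `A_max[i]`: the largest `j` such that there is an ε-walk from `Q[j]` to `Q[i]`. -/
noncomputable def Amax (A : GNFA σ Q) (i : ℕ) : ℕ :=
  sSup {j | ∃ u v : Q, rankQ u = i ∧ rankQ v = j ∧ A.EpsWalk v u}

/-- `A_min[i]`: the smallest `j` such that there is an ε-walk from `Q[j]` to `Q[i]`. -/
noncomputable def Amin (A : GNFA σ Q) (i : ℕ) : ℕ :=
  sInf {j | ∃ u v : Q, rankQ u = i ∧ rankQ v = j ∧ A.EpsWalk v u}

variable [LinearOrder σ]

/-- `f_k = out(Q[1, |G^≺(p(α, |α|−k))|], s(α, k))`. -/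
noncomputable def fk (A : GNFA σ Q) (α : List σ) (k : ℕ) : ℕ :=
  A.outC ((A.Gprec (pref α (α.length - k))).ncard) (suff α k)

/-- `g_k = out(Q[1, |G^≺_⊣(p(α, |α|−k))|], s(α, k))`. -/
noncomputable def gk (A : GNFA σ Q) (α : List σ) (k : ℕ) : ℕ :=
  A.outC ((A.GprecSuf (pref α (α.length - k))).ncard) (suff α k)

/-- The property defining `j*` in Lemmas 2 and 4 (largest `j` satisfying it):
(i) `in(Q[1, j], s(α, k)) ≤ f_k` for every `0 < k < min{r+1, |α|}`; and
(ii) `ρ ≺ α` for every `ρ ∈ Σ^k ∩ λ(Q[h])`, every `1 ≤ h ≤ j`, every `0 < k < r+1`. -/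
def Jcond (A : GNFA σ Q) (r : ℕ) (α : List σ) (j : ℕ) : Prop :=
  (∀ k, 0 < k → k < min (r + 1) α.length → A.inC j (suff α k) ≤ A.fk α k) ∧
  (∀ k, 0 < k → k < r + 1 → ∀ h, 1 ≤ h → h ≤ j → ∀ u : Q, rankQ u = h →
      ∀ ρ : List σ, ρ.length = k → ρ ∈ A.lab u → ColexLt ρ α)

/-- The property defining `i*` (largest `i ≤ |Q|` satisfying it):
if `i ≥ 1` then `Q[i] ∈ G*(α)`. -/
def Icond (A : GNFA σ Q) (α : List σ) (i : ℕ) : Prop :=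
  1 ≤ i → ∃ u : Q, rankQ u = i ∧ u ∈ A.Gstar α

/-- The property defining `j°` (smallest `j ≤ |Q|` satisfying it):
`in(Q[1, j], s(α, k)) ≥ g_k` for every `0 < k < min{r+1, |α|}` with `g_k > f_k`. -/
def Jcond2 (A : GNFA σ Q) (r : ℕ) (α : List σ) (j : ℕ) : Prop :=
  ∀ k, 0 < k → k < min (r + 1) α.length → A.fk α k < A.gk α k →
    A.gk α k ≤ A.inC j (suff α k)

end Indexed

end GNFA

/-!
Both `G^≺(γ)` and `G^≺_⊣(γ)` are initial segments of the Wheeler order (Axiom 1), and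
`G_⊣(γ)` is disjoint from `G^≺(γ)`, so the ranks of states of `G_⊣(α)` exceed `|G^≺(α)|`.
Suppose some path spells a word with suffix `α`, and look at its last edge with a nonempty
label `ρ`. If `|α| ≤ |ρ|`, the target of that edge lies in `G*(α) ∩ G_⊣(α)`, whence
`i* > |G^≺(α)|`. Otherwise `ρ = s(α, k)` with `0 < k < |α|` and the edge leaves a state of
`G_⊣(p(α, |α| - k))`; that edge is counted by `g_k` but not by `f_k`, so `j°` must satisfy
`in(Q[1, j°], s(α, k)) ≥ g_k > f_k`. But every edge labeled `s(α, k)` entering `G^≺(α)`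
leaves `G^≺(p(α, |α| - k))`, so `in(Q[1, j], s(α, k)) ≤ f_k` for `j ≤ |G^≺(α)|`, whence
`j° > |G^≺(α)|`.
-/

namespace List

variable {σ : Type*} [LinearOrder σ]

theorem lt_of_lt_append_of_not_prefix : ∀ {a g : List σ} (d : List σ), ¬g <+: a →
    a < g ++ d → a < g
  | _, [], _, hp, _ => absurd nil_prefix hp
  | [], _ :: _, _, _, _ => Lex.nil
  | x :: a, y :: g, d, hp, h => by
      cases h with
      | rel h => exact Lex.rel h
      | cons h =>
          exact Lex.cons (lt_of_lt_append_of_not_prefix d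
            (fun hpre => hp (cons_prefix_cons.mpr ⟨rfl, hpre⟩)) h)

theorem lt_of_append_lt_append_left {s t₁ t₂ : List σ} (h : s ++ t₁ < s ++ t₂) : t₁ < t₂ := by
  by_contra hge
  exact append_left_le (l₁ := s) hge h

end List

section Colex

variable {σ : Type*} [LinearOrder σ] {α β γ δ : List σ}

theorem colexLt_iff : ColexLt α β ↔ α.reverse < β.reverse := Iff.rfl

theorem ColexLt.trans (h₁ : ColexLt α β) (h₂ : ColexLt β γ) : ColexLt α γ :=
  colexLt_iff.2 (lt_trans (colexLt_iff.1 h₁) (colexLt_iff.1 h₂))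

theorem not_colexLt_of_suffix (h : α <:+ β) : ¬ColexLt β α :=
  (List.reverse_prefix.2 h).le

theorem ColexLt.of_append_right (h : ColexLt (α ++ γ) (β ++ γ)) : ColexLt α β :=
  List.lt_of_append_lt_append_left (by simpa [colexLt_iff] using h)

theorem ColexLt.of_append_left_of_not_suffix (hs : ¬γ <:+ β) (h : ColexLt β (δ ++ γ)) :
    ColexLt β γ :=
  List.lt_of_lt_append_of_not_prefix _ (fun hp => hs (List.reverse_prefix.1 hp))
    (by simpa [colexLt_iff] using h)

end Colex

section Rank

variable {Q : Type*} [Fintype Q] [LinearOrder Q] {S : Set Q} {v : Q}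

theorem rankQ_le_ncard_iff (hS : IsLowerSet S) : rankQ v ≤ S.ncard ↔ v ∈ S := by
  refine ⟨fun hv => ?_, fun hv => Set.ncard_le_ncard (fun _ hw => hS hw hv) S.toFinite⟩
  by_contra hvS
  have hlt : S ⊂ Set.Iic v :=
    ⟨fun w hw => le_of_not_ge fun hvw => hvS (hS hvw hw), fun h => hvS (h le_rfl)⟩
  exact hv.not_gt (Set.ncard_lt_ncard hlt (Set.toFinite _))

theorem rankQ_le_card (v : Q) : rankQ v ≤ Fintype.card Q := by
  simpa [rankQ, Set.ncard_univ] using Set.ncard_le_ncard (Set.subset_univ {w | w ≤ v})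

end Rank

theorem pref_append_suff {σ : Type*} (α : List σ) (k : ℕ) :
    pref α (α.length - k) ++ suff α k = α :=
  List.take_append_drop _ _

theorem suff_eq_and_pref_suffix_of_suffix_append {σ : Type*} {α γ ρ : List σ}
    (h : α <:+ γ ++ ρ) (hlen : ρ.length ≤ α.length) :
    suff α ρ.length = ρ ∧ pref α (α.length - ρ.length) <:+ γ := by
  obtain ⟨δ, hδ⟩ := h
  rw [← pref_append_suff α ρ.length, ← List.append_assoc] at hδ
  obtain ⟨hpref, hsuff⟩ := List.append_inj' hδ (by simp [suff]; omega)
  exact ⟨hsuff, δ, hpref⟩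

namespace GNFA

variable {σ Q : Type*} {A : GNFA σ Q}

theorem Standard.exists_I (hA : A.Standard) (v : Q) : ∃ β, A.I v β := by
  induction hA.1 v with
  | refl => exact ⟨[], I.base⟩
  | tail _ hE ih =>
    obtain ⟨β, hβ⟩ := ih
    obtain ⟨ρ, hρ⟩ := hE
    exact ⟨β ++ ρ, hβ.step hρ⟩

theorem exists_gstar_or_boundary_edge {r : ℕ} (hr : A.Bounded r) {α : List σ} (hα : α ≠ [])
    {u : Q} {β : List σ} (hβ : A.I u β) (hs : α <:+ β) :
    (∃ v, v ∈ A.Gstar α ∩ A.Gsuf α) ∨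
      ∃ k, 0 < k ∧ k < α.length ∧ k ≤ r ∧
        ∃ x y, (x, y, suff α k) ∈ A.E ∧ x ∈ A.Gsuf (pref α (α.length - k)) := by
  induction hβ with
  | base => exact absurd (List.suffix_nil.1 hs) hα
  | @step w v γ ρ hγ hE ih =>
    by_cases hlen : α.length ≤ ρ.length
    · have hαρ : α <:+ ρ := List.suffix_of_suffix_length_le hs (List.suffix_append γ ρ) hlen
      exact Or.inl ⟨v, ⟨ρ, ⟨w, hE⟩, hαρ⟩, γ ++ ρ, hγ.step hE, hs⟩
    by_cases hρ : ρ = []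
    · subst hρ
      exact ih (by simpa using hs)
    obtain ⟨hsuff, hpref⟩ := suff_eq_and_pref_suffix_of_suffix_append hs (by omega)
    exact Or.inr ⟨ρ.length, List.length_pos_iff.2 hρ, by omega, hr _ hE, w, v,
      by rwa [hsuff], γ, hγ, hpref⟩

section Counting

variable [Fintype Q] [LinearOrder Q]

theorem outC_lt_outC {m n : ℕ} {x y : Q} {ρ : List σ} (hE : (x, y, ρ) ∈ A.E)
    (hm : m < rankQ x) (hn : rankQ x ≤ n) : A.outC m ρ < A.outC n ρ := by
  refine Set.ncard_lt_ncard ⟨fun e he => ⟨he.1, he.2.1.trans (by omega), he.2.2⟩,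
    fun h => ?_⟩ (A.E.finite_toSet.subset fun e he => he.1)
  exact (h ⟨hE, hn, rfl⟩).2.1.not_gt hm

theorem inC_le_outC {j m : ℕ} {ρ : List σ}
    (h : ∀ x y, (x, y, ρ) ∈ A.E → rankQ y ≤ j → rankQ x ≤ m) : A.inC j ρ ≤ A.outC m ρ := by
  refine Set.ncard_le_ncard ?_ (A.E.finite_toSet.subset fun e he => he.1)
  rintro ⟨x, y, _⟩ ⟨hE, hy, rfl⟩
  exact ⟨hE, h x y hE hy, rfl⟩

end Counting

variable [LinearOrder σ]

theorem notMem_gprec_of_mem_gsuf {α : List σ} {v : Q} (hv : v ∈ A.Gsuf α) :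
    v ∉ A.Gprec α := by
  obtain ⟨β, hβ, hs⟩ := hv
  exact fun hp => not_colexLt_of_suffix hs (hp β hβ)

theorem mem_gprec_of_edge {γ ρ : List σ} {x y : Q} (hE : (x, y, ρ) ∈ A.E)
    (hy : y ∈ A.Gprec (γ ++ ρ)) : x ∈ A.Gprec γ :=
  fun _ hβ => (hy _ (hβ.step hE)).of_append_right

variable [LinearOrder Q]

theorem isLowerSet_gprec (hA : A.Standard) (h₁ : ∀ u v : Q, u ≤ v → A.Preceq u v)
    (α : List σ) : IsLowerSet (A.Gprec α) := by
  intro v u huv hv β hβ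
  by_cases hβv : A.I v β
  · exact hv β hβv
  obtain ⟨γ, hγ⟩ := hA.exists_I v
  exact (h₁ u v huv β γ hβ hγ fun h => hβv h.1.2).trans (hv γ hγ)

theorem isLowerSet_gprecSuf (hA : A.Standard) (h₁ : ∀ u v : Q, u ≤ v → A.Preceq u v)
    (α : List σ) : IsLowerSet (A.GprecSuf α) := by
  rintro v u huv (hv | ⟨β', hβ', δ, rfl⟩)
  · exact Or.inl (isLowerSet_gprec hA h₁ α huv hv)
  by_cases hu : u ∈ A.Gsuf α
  · exact Or.inr hu
  refine Or.inl fun β hβ => ColexLt.of_append_left_of_not_suffix (δ := δ)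
    (fun hs => hu ⟨β, hβ, hs⟩) ?_
  exact h₁ u v huv β _ hβ hβ' fun h => hu ⟨_, h.2.1, δ, rfl⟩

variable [Fintype Q]

theorem fk_lt_gk (hA : A.Standard) (h₁ : ∀ u v : Q, u ≤ v → A.Preceq u v) {α : List σ}
    {k : ℕ} {x y : Q} (hE : (x, y, suff α k) ∈ A.E)
    (hx : x ∈ A.Gsuf (pref α (α.length - k))) : A.fk α k < A.gk α k :=
  outC_lt_outC hE
    (not_le.1 fun h => notMem_gprec_of_mem_gsuf hx ((rankQ_le_ncard_iff
      (isLowerSet_gprec hA h₁ _)).1 h))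
    ((rankQ_le_ncard_iff (isLowerSet_gprecSuf hA h₁ _)).2 (Or.inr hx))

theorem inC_le_fk (hA : A.Standard) (h₁ : ∀ u v : Q, u ≤ v → A.Preceq u v) {α : List σ}
    {j : ℕ} (hj : j ≤ (A.Gprec α).ncard) (k : ℕ) : A.inC j (suff α k) ≤ A.fk α k := by
  refine inC_le_outC fun x y hE hy => (rankQ_le_ncard_iff (isLowerSet_gprec hA h₁ _)).2 ?_
  refine mem_gprec_of_edge hE ?_
  rw [pref_append_suff]
  exact (rankQ_le_ncard_iff (isLowerSet_gprec hA h₁ α)).1 (hy.trans hj)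

end GNFA

theorem hstar_eq_gprec_case_general {σ Q : Type*} [LinearOrder σ]
    [Fintype Q] [LinearOrder Q] (A : GNFA σ Q)
    (hA : A.Standard) (hW : A.IsWheeler) (r : ℕ) (hr : A.Bounded r)
    (α : List σ) (hα : α ≠ [])
    (istar : ℕ)
    (hi_max : ∀ i ≤ Fintype.card Q, A.Icond α i → i ≤ istar)
    (jo : ℕ) (hjo : A.Jcond2 r α jo)
    (hstar : ℕ) (hh : hstar = max (max (A.Gprec α).ncard istar) jo) :
    (A.Gprec α).ncard ≤ hstar ∧
    (hstar = (A.Gprec α).ncard →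
      A.Gsuf α = ∅ ∧ (A.GprecSuf α).ncard = hstar ∧
      (A.GprecSuf α).ncard = (A.Gprec α).ncard) := by
  refine ⟨by omega, fun heq => ?_⟩
  have hGsuf : A.Gsuf α = ∅ := by
    refine Set.eq_empty_iff_forall_notMem.2 fun u ⟨β, hβ, hs⟩ => ?_
    rcases A.exists_gstar_or_boundary_edge hr hα hβ hs with
      ⟨v, hv_star, hv_suf⟩ | ⟨k, hk, hkα, hkr, x, y, hE, hx⟩
    · have hv_istar := hi_max _ (rankQ_le_card v) fun _ => ⟨v, rfl, hv_star⟩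
      have hv_gprec := (rankQ_le_ncard_iff (A.isLowerSet_gprec hA hW.1 α)).not.2
        (A.notMem_gprec_of_mem_gsuf hv_suf)
      omega
    · have hfg := A.fk_lt_gk hA hW.1 hE hx
      have hg_le := hjo k hk (by omega) hfg
      have hin_le := A.inC_le_fk hA hW.1 (α := α) (j := jo) (by omega) k
      omega
  have hGprecSuf : A.GprecSuf α = A.Gprec α := by
    rw [GNFA.GprecSuf, hGsuf, Set.union_empty]
  exact ⟨hGsuf, by rw [hGprecSuf, heq], by rw [hGprecSuf]⟩

/-- Let `A` be a Wheeler `r`-GNFA with Wheeler order `≤` and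
`α ≠ ε`. Let `i*` be the largest `0 ≤ i ≤ |Q|` with (`i ≥ 1 →` `Q[i] ∈ G*(α)`),
`j°` the smallest `0 ≤ j ≤ |Q|` with `in(Q[1,j], s(α,k)) ≥ g_k` for every
`0 < k < min{r+1,|α|}` with `g_k > f_k`, and `h* = max{|G^≺(α)|, i*, j°}`.
Then `h* ≥ |G^≺(α)|`, and if `h* = |G^≺(α)|`, then `G_⊣(α) = ∅` and
`|G^≺_⊣(α)| = h* = |G^≺(α)|`. -/
theorem hstar_eq_gprec_case {σ Q : Type*} [Fintype σ] [LinearOrder σ]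
    [Fintype Q] [LinearOrder Q] (A : GNFA σ Q)
    (hA : A.Standard) (hW : A.IsWheeler) (r : ℕ) (hr : A.Bounded r)
    (α : List σ) (hα : α ≠ [])
    (istar : ℕ) (hi_le : istar ≤ Fintype.card Q) (hi : A.Icond α istar)
    (hi_max : ∀ i ≤ Fintype.card Q, A.Icond α i → i ≤ istar)
    (jo : ℕ) (hjo_le : jo ≤ Fintype.card Q) (hjo : A.Jcond2 r α jo)
    (hjo_min : ∀ j ≤ Fintype.card Q, A.Jcond2 r α j → jo ≤ j)
    (hstar : ℕ) (hh : hstar = max (max (A.Gprec α).ncard istar) jo) :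
    (A.Gprec α).ncard ≤ hstar ∧
    (hstar = (A.Gprec α).ncard →
      A.Gsuf α = ∅ ∧ (A.GprecSuf α).ncard = hstar ∧
      (A.GprecSuf α).ncard = (A.Gprec α).ncard) :=
  hstar_eq_gprec_case_general A hA hW r hr α hα istar hi_max jo hjo hstar hh
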